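/- Assume n > 2 and m ≥ 3. No N-scoring rule whose scores satisfy s_{m−1} < s_m (i.e. k* = m − 1) is regret-free truth-telling. -/

import Mathlib

open Function

/-- A preference: a bijection from positions (`0` = bottom/worst, `m-1` = top/best)
to alternatives.  `p k` is the alternative in the `(k+1)`-th position from the bottom. -/
abbrev Pref (m : ℕ) := Equiv.Perm (Fin m)

/-- A profile: one preference for each of the `n` agents. -/
abbrev Profile (n m : ℕ) := Fin n → Pref m

/-- `x` is strictly preferred to `y` under `p`. -/
def prefers {m : ℕ} (p : Pref m) (x y : Fin m) : Prop :=
  p.symm y < p.symm x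

instance {m : ℕ} (p : Pref m) (x y : Fin m) : Decidable (prefers p x y) :=
  inferInstanceAs (Decidable (p.symm y < p.symm x))

/-- `x` is the top (best) alternative of `p`. -/
def IsBest {m : ℕ} (p : Pref m) (x : Fin m) : Prop :=
  ∀ y, p.symm y ≤ p.symm x

instance {m : ℕ} (p : Pref m) (x : Fin m) : Decidable (IsBest p x) :=
  inferInstanceAs (Decidable (∀ y, p.symm y ≤ p.symm x))

/-- Regret-free truth-telling: whenever a misreport `Pi'` by agent `i` yields a strictly
better outcome, there is a subprofile of the others (a full profile `Pstar` agreeing with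
`P` at `i`) consistent with the observed outcome at which the misreport does strictly worse. -/
def RFTT {n m : ℕ} (f : Profile n m → Fin m) : Prop :=
  ∀ (i : Fin n) (P : Profile n m) (Pi' : Pref m),
    prefers (P i) (f (update P i Pi')) (f P) →
    ∃ Pstar : Profile n m, Pstar i = P i ∧ f Pstar = f P ∧
      prefers (P i) (f Pstar) (f (update Pstar i Pi'))

/-- Strategy-proofness: truth-telling yields a weakly better outcome. -/
def StrategyProof {n m : ℕ} (f : Profile n m → Fin m) : Prop :=
  ∀ (P : Profile n m) (i : Fin n) (Pi' : Pref m),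
    f P = f (update P i Pi') ∨ prefers (P i) (f P) (f (update P i Pi'))

/-- Tops-only: the outcome only depends on the agents' top alternatives. -/
def TopsOnly {n m : ℕ} (f : Profile n m → Fin m) : Prop :=
  ∀ P P' : Profile n m, (∀ i x, IsBest (P i) x ↔ IsBest (P' i) x) → f P = f P'

/-- Efficiency: no alternative is strictly preferred to the outcome by every agent. -/
def Efficient {n m : ℕ} (f : Profile n m → Fin m) : Prop :=
  ∀ P : Profile n m, ¬ ∃ y, ∀ i, prefers (P i) y (f P)

/-- Dictatorship: some agent always gets his top alternative. -/
def Dictatorial {n m : ℕ} (f : Profile n m → Fin m) : Prop :=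
  ∃ i : Fin n, ∀ P : Profile n m, IsBest (P i) (f P)

/-- Anonymity: invariance under permutations of the agents. -/
def Anonymous {n m : ℕ} (f : Profile n m → Fin m) : Prop :=
  ∀ (P : Profile n m) (σ : Equiv.Perm (Fin n)), f P = f (fun i => P (σ i))

/-- Neutrality: relabelling the alternatives relabels the outcome accordingly. -/
def Neutral {n m : ℕ} (f : Profile n m → Fin m) : Prop :=
  ∀ (P : Profile n m) (π : Equiv.Perm (Fin m)),
    π (f P) = f (fun i => (P i).trans π)

/-- The minimal position (`0`-indexed, from the bottom) of alternative `x` in profile `P`. -/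
noncomputable def minpos {n m : ℕ} (P : Profile n m) (x : Fin m) : ℕ :=
  ⨅ i : Fin n, ((P i).symm x : ℕ)

/-- The maxmin winners of profile `P`. -/
def MaxminSet {n m : ℕ} (P : Profile n m) : Set (Fin m) :=
  {x | ∀ y, minpos P y ≤ minpos P x}

/-- An `A`-maxmin rule: breaks ties among maxmin winners by a fixed strict linear order. -/
def AMaxmin {n m : ℕ} (f : Profile n m → Fin m) : Prop :=
  ∃ r : Fin m → Fin m → Prop, IsStrictTotalOrder (Fin m) r ∧
    ∀ P : Profile n m, f P ∈ MaxminSet P ∧ ∀ y ∈ MaxminSet P, y ≠ f P → r (f P) y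

/-- An `N`-maxmin rule: breaks ties among maxmin winners by a fixed agent's preference. -/
def NMaxmin {n m : ℕ} (f : Profile n m → Fin m) : Prop :=
  ∃ i : Fin n, ∀ P : Profile n m,
    f P ∈ MaxminSet P ∧ ∀ y ∈ MaxminSet P, y ≠ f P → prefers (P i) (f P) y

/-- The score of alternative `x` in profile `P`, for scores `s` (indexed by position
from the bottom). -/
noncomputable def score {n m : ℕ} (s : Fin m → ℝ) (P : Profile n m) (x : Fin m) : ℝ :=
  ∑ i : Fin n, s ((P i).symm x)

/-- The scoring winners of profile `P`. -/
def ScoreSet {n m : ℕ} (s : Fin m → ℝ) (P : Profile n m) : Set (Fin m) :=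
  {x | ∀ y, score s P y ≤ score s P x}

/-- An `A`-scoring rule: breaks ties among scoring winners by a fixed strict linear order. -/
def AScoring {n m : ℕ} (s : Fin m → ℝ) (f : Profile n m → Fin m) : Prop :=
  ∃ r : Fin m → Fin m → Prop, IsStrictTotalOrder (Fin m) r ∧
    ∀ P : Profile n m, f P ∈ ScoreSet s P ∧ ∀ y ∈ ScoreSet s P, y ≠ f P → r (f P) y

/-- An `N`-scoring rule: breaks ties among scoring winners by a fixed agent's preference. -/
def NScoring {n m : ℕ} (s : Fin m → ℝ) (f : Profile n m → Fin m) : Prop :=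
  ∃ i : Fin n, ∀ P : Profile n m,
    f P ∈ ScoreSet s P ∧ ∀ y ∈ ScoreSet s P, y ≠ f P → prefers (P i) (f P) y

/-- The number of agents preferring `a` to `b` in profile `P`. -/
def numPref {n m : ℕ} (P : Profile n m) (a b : Fin m) : ℕ :=
  (Finset.univ.filter fun i => prefers (P i) a b).card

/-- `a` is a Condorcet winner at `P`. -/
def CondorcetWinner {n m : ℕ} (P : Profile n m) (a : Fin m) : Prop :=
  ∀ b, b ≠ a → numPref P b a < numPref P a b

/-- Condorcet consistency: the rule picks the Condorcet winner whenever one exists. -/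
def CondorcetConsistent {n m : ℕ} (f : Profile n m → Fin m) : Prop :=
  ∀ (P : Profile n m) (a : Fin m), CondorcetWinner P a → f P = a

/-- `p'` is a monotonic transformation of `p` with respect to `a`: all positions up to
(and including) the position of `a` are unchanged. -/
def MonoTransf {m : ℕ} (p p' : Pref m) (a : Fin m) : Prop :=
  ∀ k : Fin m, k ≤ p.symm a → p k = p' k

/-- Monotonicity: an alternative ranked below the outcome by agent `i` cannot become
the outcome after a monotonic transformation of `i`'s preference w.r.t. the outcome. -/
def MonotoneRule {n m : ℕ} (f : Profile n m → Fin m) : Prop :=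
  ∀ (P : Profile n m) (i : Fin n) (b : Fin m), prefers (P i) (f P) b →
    ∀ Pi' : Pref m, MonoTransf (P i) Pi' (f P) → f (update P i Pi') ≠ b

/-- One pairwise majority contest: the challenger `y` beats the incumbent `c` only if
strictly more agents prefer `y` to `c` (ties go to the incumbent, who always comes
earlier in the fixed order). -/
def duel {n m : ℕ} (P : Profile n m) (c y : Fin m) : Fin m :=
  if numPref P c y < numPref P y c then y else c

/-- Run successive pairwise contests starting from incumbent `c` against the listed
challengers in order. -/
def seRun {n m : ℕ} (P : Profile n m) : Fin m → List (Fin m) → Fin m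
  | c, [] => c
  | c, y :: rest => seRun P (duel P c y) rest

/-- The survivor of successive elimination along a list of alternatives (none if empty). -/
def seWinner? {n m : ℕ} (P : Profile n m) : List (Fin m) → Option (Fin m)
  | [] => none
  | c :: rest => some (seRun P c rest)

/-- A successive elimination rule: there is an enumeration `e 0 ≻ e 1 ≻ ⋯ ≻ e (m-1)` of the
alternatives such that the rule outputs the survivor of the sequential pairwise majority
contests (ties resolved in favour of the `≻`-greater, i.e. earlier, alternative). -/
def SuccElim {n m : ℕ} (f : Profile n m → Fin m) : Prop :=
  ∃ e : Fin m ≃ Fin m, ∀ P : Profile n m,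
    seWinner? P ((List.finRange m).map e) = some (f P)

/-!
Let `i₀` be the agent who breaks ties, truthfully ranking `best ≻ second ≻ third ≻ …`.
For even `n`, and for odd `n` when `s 0 < s third`, there is a profile in which `third` wins by
exactly `s best - s second` over `second`, so `i₀` gains by swapping her top two alternatives.
She can never regret this: the swap changes no score below `third`, so at any profile where
truth-telling yields `third` the deviation still yields `third` or better.
For odd `n` with `s 0 = s third`, a Condorcet-like cycle on the top three alternatives makes
`best` win only through the tie-break, while an agent ranking `best` last can lift `third` above
it; a deviation away from one's worst alternative is never regretted.
-/

lemma prefers_one {m : ℕ} {x y : Fin m} : prefers 1 x y ↔ y < x := Iff.rfl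

@[simp] lemma one_symm_apply {m : ℕ} (x : Fin m) : (1 : Pref m).symm x = x := rfl

lemma prefers.asymm {m : ℕ} {p : Pref m} {x y : Fin m} (h : prefers p x y) : ¬ prefers p y x :=
  lt_asymm h

lemma prefers.ne {m : ℕ} {p : Pref m} {x y : Fin m} (h : prefers p x y) : x ≠ y := by
  rintro rfl
  exact lt_irrefl _ h

namespace ScoringRegret

open Equiv

variable {n m : ℕ}

lemma score_update (s : Fin m → ℝ) (P : Profile n m) (i : Fin n) (q : Pref m) (x : Fin m) :
    score s (update P i q) x = score s P x - s ((P i).symm x) + s (q.symm x) := by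
  have h : ∀ k, s ((update P i q k).symm x) =
      update (fun k => s ((P k).symm x)) i (s (q.symm x)) k := fun k => by
    rcases eq_or_ne k i with rfl | hk <;> simp [*]
  simp only [score, h, Finset.sum_update_of_mem (Finset.mem_univ i),
    ← Finset.sum_erase_eq_sub (Finset.mem_univ i), Finset.sdiff_singleton_eq_erase]
  ring

lemma score_comp_equiv {N : ℕ} (s : Fin m → ℝ) (P : Profile N m) (τ : Fin n ≃ Fin N)
    (x : Fin m) : score s (P ∘ τ) x = score s P x :=
  τ.sum_comp fun k => s ((P k).symm x)

lemma exists_profile_score_eq (s : Fin m → ℝ) (i₀ : Fin n) (p₀ p₁ pa pb : Pref m) {o e : ℕ}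
    (hn : n = o + e + 2) :
    ∃ (Q : Profile n m) (j : Fin n), Q i₀ = p₀ ∧ Q j = p₁ ∧ ∀ x, score s Q x =
      s (p₀.symm x) + s (p₁.symm x) + o * s (pa.symm x) + e * s (pb.symm x) := by
  subst hn
  let B : Profile (o + e + 2) m :=
    Matrix.vecCons p₀ (Matrix.vecCons p₁ (Fin.append (fun _ => pa) (fun _ => pb)))
  let τ := swap i₀ 0
  refine ⟨B ∘ τ, τ 1, by simp [τ, B], by simp [τ, B], fun x => ?_⟩
  rw [score_comp_equiv]
  simp [score, B, Fin.sum_univ_succ, Fin.sum_univ_add]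
  ring

def IsScoringTieBrokenBy (s : Fin m → ℝ) (i₀ : Fin n) (f : Profile n m → Fin m) : Prop :=
  ∀ P, f P ∈ ScoreSet s P ∧ ∀ y ∈ ScoreSet s P, y ≠ f P → prefers (P i₀) (f P) y

namespace IsScoringTieBrokenBy

variable {s : Fin m → ℝ} {i₀ : Fin n} {f : Profile n m → Fin m}

lemma score_le (hf : IsScoringTieBrokenBy s i₀ f) (P : Profile n m) (y : Fin m) :
    score s P y ≤ score s P (f P) :=
  (hf P).1 y

lemma apply_ne_of_score_lt (hf : IsScoringTieBrokenBy s i₀ f) {P : Profile n m} {w y : Fin m}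
    (h : score s P w < score s P y) : f P ≠ w := by
  rintro rfl
  exact (hf.score_le P y).not_gt h

lemma apply_eq (hf : IsScoringTieBrokenBy s i₀ f) {P : Profile n m} {w : Fin m}
    (hmax : ∀ y, score s P y ≤ score s P w)
    (hlt : ∀ y, prefers (P i₀) y w → score s P y < score s P w) : f P = w := by
  by_contra hne
  exact (hlt _ ((hf P).2 w hmax (Ne.symm hne))).not_ge (hf.score_le P w)

end IsScoringTieBrokenBy

theorem not_rftt_of_safe_deviation {s : Fin m → ℝ} {i₀ : Fin n} {f : Profile n m → Fin m}
    (hf : IsScoringTieBrokenBy s i₀ f) (P : Profile n m) (q : Pref m)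
    (hgain : prefers (P i₀) (f (update P i₀ q)) (f P))
    (hsafe : ∀ y, prefers (P i₀) (f P) y →
      s (q.symm y) - s ((P i₀).symm y) ≤ s (q.symm (f P)) - s ((P i₀).symm (f P)) ∧
        prefers q (f P) y) :
    ¬ RFTT f := by
  intro hR
  obtain ⟨P', hP'i₀, hP'f, hworse⟩ := hR i₀ P q hgain
  set R := update P' i₀ q
  rw [hP'f] at hworse
  obtain ⟨hδ, hq⟩ := hsafe _ hworse
  have hmax : f P ∈ ScoreSet s R := fun z => by
    have := hf.score_le P' (f R)
    rw [hP'f] at this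
    calc score s R z ≤ score s R (f R) := hf.score_le R z
      _ ≤ score s R (f P) := by
        simp only [R, score_update, hP'i₀]
        linarith
  have htie := (hf R).2 _ hmax hworse.ne
  simp only [R, update_self] at htie
  exact hq.asymm htie

theorem not_rftt_of_deviation_from_worst (f : Profile n m → Fin m) (P : Profile n m) (i : Fin n)
    (q : Pref m) (hworst : ∀ y ≠ f P, prefers (P i) y (f P))
    (hchange : f (update P i q) ≠ f P) : ¬ RFTT f := by
  intro hR
  obtain ⟨P', -, hP'f, hworse⟩ := hR i P q (hworst _ hchange)
  rw [hP'f] at hworse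
  exact hworse.asymm (hworst _ hworse.ne.symm)

section TopThree

variable {k : ℕ}

def best : Fin (k + 3) := ⟨k + 2, by omega⟩

def second : Fin (k + 3) := ⟨k + 1, by omega⟩

def third : Fin (k + 3) := ⟨k, by omega⟩

@[simp] lemma second_ne_best : (second : Fin (k + 3)) ≠ best := by simp [second, best]
@[simp] lemma third_ne_best : (third : Fin (k + 3)) ≠ best := by simp [third, best]
@[simp] lemma third_ne_second : (third : Fin (k + 3)) ≠ second := by simp [third, second]
@[simp] lemma zero_ne_best : (0 : Fin (k + 3)) ≠ best := by simp [best, Fin.ext_iff]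
@[simp] lemma zero_ne_second : (0 : Fin (k + 3)) ≠ second := by simp [second, Fin.ext_iff]

lemma lt_third_iff {x : Fin (k + 3)} : x < third ↔ x ≠ best ∧ x ≠ second ∧ x ≠ third := by
  simp only [best, second, third, ne_eq, Fin.ext_iff, Fin.lt_def]
  omega

lemma le_third_of_ne {x : Fin (k + 3)} (h₁ : x ≠ best) (h₂ : x ≠ second) : x ≤ third := by
  simp only [best, second, third, ne_eq, Fin.ext_iff, Fin.le_def] at *
  omega

lemma eq_or_eq_or_eq_or_lt_third (x : Fin (k + 3)) :
    x = best ∨ x = second ∨ x = third ∨ x < third := by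
  simp only [lt_third_iff]
  tauto

lemma le_best (x : Fin (k + 3)) : x ≤ best := by
  simp only [best, Fin.le_def]
  omega

lemma third_lt_second : (third : Fin (k + 3)) < second := by
  simp [third, second, Fin.lt_def]

/-- A position map: `rotateTop x` is the position of `x`, so `rotateTop.symm` ranks
`third ≻ best ≻ second ≻ …`. -/
def rotateTop : Perm (Fin (k + 3)) := (swap best second).trans (swap best third)

/-- `sinkBest.symm` ranks `third ≻ second ≻ … ≻ best`, with `0` moved up to `third`'s place. -/
def sinkBest : Perm (Fin (k + 3)) := (swap best third).trans (swap third 0)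

/-- `sinkBest'.symm` ranks `second ≻ third ≻ … ≻ best`. -/
def sinkBest' : Perm (Fin (k + 3)) := sinkBest.trans (swap best second)

@[simp] lemma rotateTop_best : rotateTop best = (second : Fin (k + 3)) := by
  simp [rotateTop, swap_apply_def, best, second, third, Fin.ext_iff]
@[simp] lemma rotateTop_second : rotateTop second = (third : Fin (k + 3)) := by
  simp [rotateTop]
@[simp] lemma rotateTop_third : rotateTop third = (best : Fin (k + 3)) := by
  simp [rotateTop, swap_apply_def, best, second, third, Fin.ext_iff]
@[simp] lemma sinkBest_best : sinkBest best = (0 : Fin (k + 3)) := by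
  simp [sinkBest]
@[simp] lemma sinkBest_second : sinkBest second = (second : Fin (k + 3)) := by
  simp [sinkBest, swap_apply_def, best, second, third, Fin.ext_iff]
@[simp] lemma sinkBest_third : sinkBest third = (best : Fin (k + 3)) := by
  simp [sinkBest, swap_apply_def, best, third, Fin.ext_iff]
@[simp] lemma sinkBest'_best : sinkBest' best = (0 : Fin (k + 3)) := by
  simp [sinkBest', swap_apply_of_ne_of_ne]
@[simp] lemma sinkBest'_second : sinkBest' second = (best : Fin (k + 3)) := by
  simp [sinkBest']
@[simp] lemma sinkBest'_third : sinkBest' third = (second : Fin (k + 3)) := by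
  simp [sinkBest']

end TopThree

section Attacks

variable {n k : ℕ} {s : Fin (k + 3) → ℝ} {i₀ : Fin n} {f : Profile n (k + 3) → Fin (k + 3)}

lemma apply_le_third (hs : Monotone s) {π : Perm (Fin (k + 3))} {u v x : Fin (k + 3)}
    (hu : π u = best) (hv : π v = second) (hxu : x ≠ u) (hxv : x ≠ v) : s (π x) ≤ s third :=
  hs (le_third_of_ne (hu ▸ π.injective.ne hxu) (hv ▸ π.injective.ne hxv))

theorem not_rftt_of_third_wins (hs : s second < s best) (hf : IsScoringTieBrokenBy s i₀ f)
    (Q : Profile n (k + 3)) (hQ : Q i₀ = 1)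
    (hgap : score s Q third = score s Q second + (s best - s second))
    (hbest : score s Q best < score s Q third)
    (hrest : ∀ x < third, score s Q x ≤ score s Q third) :
    ¬ RFTT f := by
  have hwin : f Q = third := by
    refine hf.apply_eq (fun y => ?_) (fun y hy => ?_)
    · rcases eq_or_eq_or_eq_or_lt_third y with rfl | rfl | rfl | hy
      exacts [hbest.le, by linarith, le_rfl, hrest y hy]
    · rw [hQ, prefers_one] at hy
      rcases eq_or_eq_or_eq_or_lt_third y with rfl | rfl | rfl | hy'
      exacts [hbest, by linarith, absurd hy (lt_irrefl _), absurd hy hy'.not_gt]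
  let q : Pref (k + 3) := swap best second
  have hq : ∀ x, score s (update Q i₀ q) x = score s Q x - s x + s (q x) := fun x => by
    simp [score_update, hQ, q]
  have hdev : f (update Q i₀ q) = second := by
    refine hf.apply_eq (fun y => ?_) (fun y hy => ?_)
    · rcases eq_or_eq_or_eq_or_lt_third y with rfl | rfl | rfl | hy
      · simp only [hq, q, swap_apply_left, swap_apply_right]
        linarith
      · exact le_rfl
      · simp only [hq, q, swap_apply_right, swap_apply_of_ne_of_ne third_ne_best third_ne_second]
        linarith
      · obtain ⟨h₁, h₂, -⟩ := lt_third_iff.1 hy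
        simp only [hq, q, swap_apply_right, swap_apply_of_ne_of_ne h₁ h₂]
        linarith [hrest y hy]
    · simp only [update_self, prefers, q, symm_swap, swap_apply_right] at hy
      exact absurd hy (le_best _).not_gt
  refine not_rftt_of_safe_deviation hf Q q ?_ fun y hy => ?_
  · rw [hdev, hwin, hQ, prefers_one]
    exact third_lt_second
  · rw [hwin, hQ, prefers_one] at hy
    obtain ⟨h₁, h₂, -⟩ := lt_third_iff.1 hy
    simp [q, hwin, hQ, prefers, swap_apply_of_ne_of_ne, h₁, h₂, hy]

theorem not_rftt_of_even (hs : Monotone s) (hgap : s second < s best)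
    (hf : IsScoringTieBrokenBy s i₀ f) {e : ℕ} (hn : n = e + e + 2) (he : 1 ≤ e) :
    ¬ RFTT f := by
  obtain ⟨Q, -, hQ, -, hscore⟩ := exists_profile_score_eq s i₀ 1 rotateTop.symm sinkBest.symm
    sinkBest'.symm hn
  simp only [symm_symm, one_symm_apply] at hscore
  have he' : (1 : ℝ) ≤ e := by exact_mod_cast he
  have h0 : s 0 ≤ s third := hs (Fin.zero_le _)
  have h3 : s third ≤ s second := hs third_lt_second.le
  refine not_rftt_of_third_wins hgap hf Q hQ ?_ ?_ fun x hx => ?_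
  · simp only [hscore, rotateTop_second, rotateTop_third, sinkBest_second, sinkBest_third,
      sinkBest'_second, sinkBest'_third]
    ring
  · simp only [hscore, rotateTop_best, rotateTop_third, sinkBest_best, sinkBest_third,
      sinkBest'_best, sinkBest'_third]
    nlinarith
  · obtain ⟨h₁, h₂, h₃⟩ := lt_third_iff.1 hx
    have hx₀ : s x ≤ s third := hs hx.le
    have hx₁ := apply_le_third hs rotateTop_third rotateTop_best h₃ h₁
    have hx₂ := apply_le_third hs sinkBest_third sinkBest_second h₃ h₂
    have hx₃ := apply_le_third hs sinkBest'_second sinkBest'_third h₂ h₃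
    simp only [hscore, rotateTop_third, sinkBest_third, sinkBest'_third]
    nlinarith

theorem not_rftt_of_odd_of_lt_third (hs : Monotone s) (hgap : s second < s best)
    (hf : IsScoringTieBrokenBy s i₀ f) {e : ℕ} (hn : n = e + 1 + e + 2) (hlow : s 0 < s third) :
    ¬ RFTT f := by
  let π : Perm (Fin (k + 3)) := (swap second third).trans (swap best 0)
  have hπ : π best = 0 ∧ π second = third ∧ π third = second := by
    have : third ≠ 0 := fun h => hlow.ne (congrArg s h.symm)
    simp [π, swap_apply_of_ne_of_ne, this, second_ne_best.symm, third_ne_best.symm,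
      zero_ne_second.symm]
  obtain ⟨Q, -, hQ, -, hscore⟩ := exists_profile_score_eq s i₀ 1 π.symm sinkBest.symm
    sinkBest'.symm hn
  simp only [symm_symm, one_symm_apply] at hscore
  have he : (0 : ℝ) ≤ e := e.cast_nonneg
  have h3 : s third ≤ s second := hs third_lt_second.le
  refine not_rftt_of_third_wins hgap hf Q hQ ?_ ?_ fun x hx => ?_
  · simp only [hscore, hπ, sinkBest_second, sinkBest_third, sinkBest'_second, sinkBest'_third]
    push_cast
    ring
  · simp only [hscore, hπ, sinkBest_best, sinkBest_third, sinkBest'_best, sinkBest'_third]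
    push_cast
    nlinarith
  · obtain ⟨h₁, h₂, h₃⟩ := lt_third_iff.1 hx
    have hx₀ : s x ≤ s third := hs hx.le
    have hx₁ : s (π x) ≤ s best := hs (le_best _)
    have hx₂ := apply_le_third hs sinkBest_third sinkBest_second h₃ h₂
    have hx₃ := apply_le_third hs sinkBest'_second sinkBest'_third h₂ h₃
    simp only [hscore, hπ, sinkBest_third, sinkBest'_third]
    push_cast
    nlinarith

theorem not_rftt_of_odd_of_eq_third (hs : Monotone s) (hgap : s second < s best)
    (hf : IsScoringTieBrokenBy s i₀ f) {e : ℕ} (hn : n = e + 1 + e + 2) (hflat : s 0 = s third) :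
    ¬ RFTT f := by
  obtain ⟨Q, j, hQ, hQj, hscore⟩ := exists_profile_score_eq s i₀ 1 sinkBest'.symm
    rotateTop.symm (swap second third).symm hn
  simp only [symm_symm, one_symm_apply, symm_swap] at hscore
  have he : (0 : ℝ) ≤ e := e.cast_nonneg
  have h3 : s third ≤ s second := hs third_lt_second.le
  have htie : score s Q third = score s Q best := by
    simp only [hscore, sinkBest'_best, sinkBest'_third, rotateTop_best, rotateTop_third,
      swap_apply_right, swap_apply_of_ne_of_ne second_ne_best.symm third_ne_best.symm, hflat]
    push_cast
    ring
  have hwin : f Q = best := by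
    refine hf.apply_eq (fun y => ?_) (fun y hy => absurd hy ?_)
    · rcases eq_or_eq_or_eq_or_lt_third y with rfl | rfl | rfl | hy
      · exact le_rfl
      · simp only [hscore, sinkBest'_best, sinkBest'_second, rotateTop_best, rotateTop_second,
          swap_apply_left, swap_apply_of_ne_of_ne second_ne_best.symm third_ne_best.symm]
        push_cast
        nlinarith
      · exact htie.le
      · obtain ⟨h₁, h₂, h₃⟩ := lt_third_iff.1 hy
        have hy₀ : s y ≤ s third := hs hy.le
        have hy₁ := apply_le_third hs sinkBest'_second sinkBest'_third h₂ h₃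
        have hy₂ := apply_le_third hs rotateTop_third rotateTop_best h₃ h₁
        have hy₃ := apply_le_third hs (swap_apply_of_ne_of_ne second_ne_best.symm
          third_ne_best.symm) (swap_apply_right second third) h₁ h₃
        simp only [hscore, sinkBest'_best, rotateTop_best,
          swap_apply_of_ne_of_ne second_ne_best.symm third_ne_best.symm]
        push_cast
        nlinarith
    · rw [hQ, prefers_one]
      exact (le_best y).not_gt
  refine not_rftt_of_deviation_from_worst f Q j sinkBest.symm (fun y hy => ?_) ?_
  · rw [hwin] at hy ⊢
    simp only [prefers, hQj, symm_symm, sinkBest'_best, Fin.pos_iff_ne_zero]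
    rw [← sinkBest'_best]
    exact sinkBest'.injective.ne hy
  · refine hf.apply_ne_of_score_lt (y := third) ?_
    simp only [score_update, hwin, hQj, symm_symm, sinkBest_best, sinkBest'_best, sinkBest_third,
      sinkBest'_third]
    linarith

end Attacks

end ScoringRegret

open ScoringRegret

/-- Assume n > 2 and m ≥ 3. No N-scoring rule whose scores satisfy
s_{m−1} < s_m (i.e. k* = m − 1) is regret-free truth-telling. -/
theorem stmt_9 (n m : ℕ) (hn : 2 < n) (hm : 3 ≤ m) (s : Fin m → ℝ)
    (hmono : Monotone s)
    (hlast : s ⟨m - 2, by omega⟩ < s ⟨m - 1, by omega⟩)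
    (f : Profile n m → Fin m) (hf : NScoring s f) :
    ¬ RFTT f := by
  obtain ⟨i₀, hf⟩ := hf
  obtain ⟨k, rfl⟩ : ∃ k, m = k + 3 := ⟨m - 3, by omega⟩
  obtain ⟨e, rfl | rfl⟩ := Nat.even_or_odd' n
  · exact not_rftt_of_even hmono hlast hf (e := e - 1) (by omega) (by omega)
  · rcases (hmono (Fin.zero_le third)).eq_or_lt with hflat | hlow
    · exact not_rftt_of_odd_of_eq_third hmono hlast hf (e := e - 1) (by omega) hflat
    · exact not_rftt_of_odd_of_lt_third hmono hlast hf (e := e - 1) (by omega) hlow
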